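/- Fibers of near-identity C¹_H maps satisfy a vertical cone condition: for every λ > 0 there is c > 0 (for λ = 2 one may take c = 1/20) with the following property. Let B = B_R(p) ⊆ ℍₙ be an open Korányi ball and let f : ℍₙ → ℝ^(2n) be of class C¹_H with ‖D_H f_q − id‖_op < c for all q ∈ B_{5R}(p). Then for all x, y ∈ B with f(x) = f(y), one has |z(x⁻¹·y)| ≥ d(x,y)²/16 and |z(x⁻¹·y)| ≥ λ |π(x⁻¹·y)|². -/

import Mathlib

open MeasureTheory Set Filter Topology
open scoped ENNReal

noncomputable section

/-- Euclidean space `ℝ^(2n)`, the horizontal layer. -/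
abbrev E (n : ℕ) : Type := EuclideanSpace ℝ (Fin (2 * n))

/-- The Heisenberg group `ℍₙ` as a set: `ℝ^(2n) × ℝ`. -/
abbrev Hpt (n : ℕ) : Type := E n × ℝ

/-- The standard symplectic form on `ℝ^(2n)` with coordinates `(x₁,y₁,…,xₙ,yₙ)`. -/
def omegaF (n : ℕ) (u v : E n) : ℝ :=
  ∑ i : Fin n,
    (u ⟨2 * i.1, by have := i.isLt; omega⟩ * v ⟨2 * i.1 + 1, by have := i.isLt; omega⟩
     - v ⟨2 * i.1, by have := i.isLt; omega⟩ * u ⟨2 * i.1 + 1, by have := i.isLt; omega⟩)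

/-- The Heisenberg group law. -/
def hmul (n : ℕ) (a b : Hpt n) : Hpt n :=
  (a.1 + b.1, a.2 + b.2 + (1 / 2) * omegaF n a.1 b.1)

/-- The Heisenberg group inverse. -/
def hinv (n : ℕ) (a : Hpt n) : Hpt n := (-a.1, -a.2)

/-- The Korányi norm. -/
def kor (n : ℕ) (q : Hpt n) : ℝ := (‖q.1‖ ^ 4 + 16 * q.2 ^ 2) ^ ((1 : ℝ) / 4)

/-- The Korányi (left-invariant, homogeneous) distance. -/
def dK (n : ℕ) (p q : Hpt n) : ℝ := kor n (hmul n (hinv n p) q)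

/-- `f` is Pansu differentiable at `x` with horizontal differential `L`. -/
def PansuDiffAt (n : ℕ) (f : Hpt n → E n) (x : Hpt n) (L : E n →L[ℝ] E n) : Prop :=
  ∀ ε > (0 : ℝ), ∃ δ > (0 : ℝ), ∀ y : Hpt n, dK n x y < δ →
    ‖f y - f x - L ((hmul n (hinv n x) y).1)‖ ≤ ε * dK n x y

/-- `f` is of class `C¹_H` with horizontal differential `D`: it is Pansu differentiable
everywhere and `x ↦ D_H f_x` is continuous in the operator norm (w.r.t. the Korányi metric). -/
def C1H (n : ℕ) (f : Hpt n → E n) (D : Hpt n → (E n →L[ℝ] E n)) : Prop :=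
  (∀ x, PansuDiffAt n f x (D x)) ∧
  (∀ x, ∀ ε > (0 : ℝ), ∃ δ > (0 : ℝ), ∀ y : Hpt n, dK n x y < δ → ‖D y - D x‖ < ε)


/-- The vertical cone property for the parameters `lam` (cone aperture) and `c`
(closeness of the differential to the identity): whenever `f` is `C¹_H` with
`‖D_H f − id‖ < c` on `B_{5R}(p)`, any two points `x, y ∈ B_R(p)` in the same fiber of `f`
satisfy `|z(x⁻¹·y)| ≥ d(x,y)²/16` and `|z(x⁻¹·y)| ≥ lam |π(x⁻¹·y)|²`. -/
def ConeProp (n : ℕ) (lam c : ℝ) : Prop :=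
  ∀ (p : Hpt n) (R : ℝ), 0 < R →
  ∀ (f : Hpt n → E n) (D : Hpt n → (E n →L[ℝ] E n)), C1H n f D →
  (∀ q : Hpt n, dK n p q < 5 * R → ‖D q - ContinuousLinearMap.id ℝ (E n)‖ < c) →
  ∀ x y : Hpt n, dK n p x < R → dK n p y < R → f x = f y →
    dK n x y ^ 2 / 16 ≤ |(hmul n (hinv n x) y).2| ∧
    lam * ‖(hmul n (hinv n x) y).1‖ ^ 2 ≤ |(hmul n (hinv n x) y).2|

/-!
Write `x⁻¹ y = (h, t)` and pick horizontal `u, v` with `‖u‖ = ‖v‖ = √|t|` and `ω(u, v) = t`.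
The horizontal polygon from `x` with legs `u, v, -u, -v, h` ends at `y`: the commutator loop
produces the vertical displacement `t`. Along a horizontal line the Pansu differential is an
ordinary derivative, so on each leg `f` moves by the leg up to an error `c · ‖leg‖`. The legs
add up to `h` and `f x = f y`, hence `‖h‖ ≤ c (‖h‖ + 4 √|t|)`, i.e. `‖h‖ ≲ c √|t|`, which gives
both inequalities. Cygan's triangle inequality for the Korányi norm keeps the polygon inside
`B_{5R}(p)`.
-/

namespace Heisenberg

variable {n : ℕ}

section Symplectic

@[simp] lemma omegaF_add_left (u u' v : E n) :
    omegaF n (u + u') v = omegaF n u v + omegaF n u' v := by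
  simp only [omegaF, PiLp.add_apply, ← Finset.sum_add_distrib]
  exact Finset.sum_congr rfl fun _ _ => by ring

@[simp] lemma omegaF_add_right (u v v' : E n) :
    omegaF n u (v + v') = omegaF n u v + omegaF n u v' := by
  simp only [omegaF, PiLp.add_apply, ← Finset.sum_add_distrib]
  exact Finset.sum_congr rfl fun _ _ => by ring

@[simp] lemma omegaF_smul_left (r : ℝ) (u v : E n) :
    omegaF n (r • u) v = r * omegaF n u v := by
  simp only [omegaF, PiLp.smul_apply, smul_eq_mul, Finset.mul_sum]
  exact Finset.sum_congr rfl fun _ _ => by ring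

@[simp] lemma omegaF_smul_right (r : ℝ) (u v : E n) :
    omegaF n u (r • v) = r * omegaF n u v := by
  simp only [omegaF, PiLp.smul_apply, smul_eq_mul, Finset.mul_sum]
  exact Finset.sum_congr rfl fun _ _ => by ring

lemma omegaF_comm (u v : E n) : omegaF n v u = -omegaF n u v := by
  simp only [omegaF, ← Finset.sum_neg_distrib]
  exact Finset.sum_congr rfl fun _ _ => by ring

@[simp] lemma omegaF_self (u : E n) : omegaF n u u = 0 := by
  linarith [omegaF_comm u u]

@[simp] lemma omegaF_zero_left (v : E n) : omegaF n 0 v = 0 := by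
  simpa using omegaF_smul_left 0 0 v

@[simp] lemma omegaF_zero_right (u : E n) : omegaF n u 0 = 0 := by
  simpa using omegaF_smul_right 0 u 0

@[simp] lemma omegaF_neg_left (u v : E n) : omegaF n (-u) v = -omegaF n u v := by
  simpa using omegaF_smul_left (-1) u v

@[simp] lemma omegaF_neg_right (u v : E n) : omegaF n u (-v) = -omegaF n u v := by
  simpa using omegaF_smul_right (-1) u v

end Symplectic

section Complexification

def evenIdx (i : Fin n) : Fin (2 * n) := ⟨2 * i.1, by omega⟩

def oddIdx (i : Fin n) : Fin (2 * n) := ⟨2 * i.1 + 1, by omega⟩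

lemma sum_fin_two_mul {M : Type*} [AddCommMonoid M] (g : Fin (2 * n) → M) :
    ∑ j, g j = ∑ i : Fin n, (g (evenIdx i) + g (oddIdx i)) := by
  rw [← (finProdFinEquiv.trans (finCongr (Nat.mul_comm n 2))).sum_comp, Fintype.sum_prod_type]
  refine Finset.sum_congr rfl fun i _ => ?_
  rw [Fin.sum_univ_two]
  congr 2 <;> ext <;> simp [evenIdx, oddIdx, mul_comm, add_comm]

def toComplex (u : E n) : EuclideanSpace ℂ (Fin n) :=
  WithLp.toLp 2 fun i => ⟨u (evenIdx i), u (oddIdx i)⟩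

lemma inner_toComplex (u v : E n) :
    inner ℂ (toComplex u) (toComplex v) = ⟨inner ℝ u v, omegaF n u v⟩ := by
  apply Complex.ext
  · simp [toComplex, PiLp.inner_apply, Complex.re_sum, sum_fin_two_mul (fun j => v j * u j)]
  · simp only [toComplex, PiLp.inner_apply, Complex.im_sum, omegaF]
    exact Finset.sum_congr rfl fun _ _ => by
      simp only [evenIdx, oddIdx, RCLike.inner_apply, Complex.mul_im, Complex.conj_im,
        Complex.conj_re]
      ring

lemma norm_toComplex (u : E n) : ‖toComplex u‖ = ‖u‖ := by
  have h := inner_self_eq_norm_sq (𝕜 := ℂ) (toComplex u)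
  rw [inner_toComplex, real_inner_self_eq_norm_sq] at h
  exact (pow_left_inj₀ (norm_nonneg _) (norm_nonneg _) two_ne_zero).1 (by simpa using h.symm)

end Complexification

section Group

lemma hmul_assoc (a b c : Hpt n) : hmul n (hmul n a b) c = hmul n a (hmul n b c) := by
  refine Prod.ext (add_assoc _ _ _) ?_
  simp only [hmul, omegaF_add_left, omegaF_add_right]
  ring

lemma hinv_hmul_cancel_left (a b : Hpt n) : hmul n (hinv n a) (hmul n a b) = b := by
  refine Prod.ext (neg_add_cancel_left _ _) ?_
  simp only [hmul, hinv, omegaF_add_right, omegaF_neg_left, omegaF_self]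
  ring

lemma hmul_hinv_cancel_left (a b : Hpt n) : hmul n a (hmul n (hinv n a) b) = b := by
  simpa [hinv] using hinv_hmul_cancel_left (hinv n a) b

lemma hinv_hmul (a b : Hpt n) : hinv n (hmul n a b) = hmul n (hinv n b) (hinv n a) := by
  refine Prod.ext (by simp [hmul, hinv, add_comm]) ?_
  simp only [hmul, hinv, omegaF_neg_left, omegaF_neg_right, neg_neg, omegaF_comm b.1]
  ring

@[simp] lemma hmul_zero (a : Hpt n) : hmul n a 0 = a := by
  simp [hmul]

lemma hmul_horizontal (w : Hpt n) (v : E n) :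
    hmul n w (v, 0) = (w.1 + v, w.2 + omegaF n w.1 v / 2) := by
  simp only [hmul, add_zero]
  ring_nf

end Group

section Koranyi

lemma kor_nonneg (q : Hpt n) : 0 ≤ kor n q := by
  unfold kor; positivity

lemma kor_pow_four (q : Hpt n) : kor n q ^ 4 = ‖q.1‖ ^ 4 + 16 * q.2 ^ 2 := by
  rw [kor, ← Real.rpow_natCast, ← Real.rpow_mul (by positivity)]
  norm_num

lemma kor_le_of_pow_four_le {q : Hpt n} {M : ℝ} (hM : 0 ≤ M)
    (h : ‖q.1‖ ^ 4 + 16 * q.2 ^ 2 ≤ M ^ 4) : kor n q ≤ M :=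
  le_of_pow_le_pow_left₀ four_ne_zero hM (kor_pow_four q ▸ h)

lemma norm_fst_le_kor (q : Hpt n) : ‖q.1‖ ≤ kor n q :=
  le_of_pow_le_pow_left₀ four_ne_zero (kor_nonneg q) <| by
    rw [kor_pow_four]
    exact le_add_of_nonneg_right (by positivity)

lemma two_mul_sqrt_abs_snd_le_kor (q : Hpt n) : 2 * √|q.2| ≤ kor n q := by
  refine le_of_pow_le_pow_left₀ four_ne_zero (kor_nonneg q) ?_
  have h : (2 * √|q.2|) ^ 4 = 16 * q.2 ^ 2 := by
    rw [show (2 * √|q.2|) ^ 4 = 16 * (√|q.2| ^ 2) ^ 2 by ring, Real.sq_sqrt (abs_nonneg _),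
      sq_abs]
  rw [h, kor_pow_four]
  nlinarith [pow_nonneg (norm_nonneg q.1) 4]

lemma kor_horizontal (v : E n) : kor n (v, 0) = ‖v‖ :=
  (pow_left_inj₀ (kor_nonneg _) (norm_nonneg v) four_ne_zero).1 (by simp [kor_pow_four])

lemma kor_hinv (q : Hpt n) : kor n (hinv n q) = kor n q := by
  simp [kor, hinv]

def korComplex (q : Hpt n) : ℂ := ⟨‖q.1‖ ^ 2, 4 * q.2⟩

lemma norm_korComplex (q : Hpt n) : ‖korComplex q‖ = kor n q ^ 2 := by
  refine (pow_left_inj₀ (norm_nonneg _) (by positivity) two_ne_zero).1 ?_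
  rw [Complex.sq_norm, Complex.normSq_apply, ← pow_mul, kor_pow_four]
  simp only [korComplex]
  ring

lemma korComplex_hmul (a b : Hpt n) :
    korComplex (hmul n a b)
      = korComplex a + korComplex b + 2 * inner ℂ (toComplex a.1) (toComplex b.1) := by
  apply Complex.ext <;>
    simp only [korComplex, hmul, norm_add_sq_real, inner_toComplex, Complex.add_re,
      Complex.add_im, Complex.mul_re, Complex.mul_im, Complex.re_ofNat, Complex.im_ofNat] <;>
    ring

/-- Cygan's inequality: by `korComplex_hmul`, `kor (a * b) ^ 2` is the modulus of a sum of
complex numbers of moduli `kor a ^ 2`, `kor b ^ 2` and at most `2 ‖π a‖ ‖π b‖`. -/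
lemma kor_hmul_le (a b : Hpt n) : kor n (hmul n a b) ≤ kor n a + kor n b := by
  refine le_of_pow_le_pow_left₀ two_ne_zero (add_nonneg (kor_nonneg a) (kor_nonneg b)) ?_
  calc kor n (hmul n a b) ^ 2
      = ‖korComplex a + korComplex b + 2 * inner ℂ (toComplex a.1) (toComplex b.1)‖ := by
        rw [← korComplex_hmul, norm_korComplex]
    _ ≤ kor n a ^ 2 + kor n b ^ 2 + 2 * (‖a.1‖ * ‖b.1‖) := by
        refine (norm_add_le _ _).trans (add_le_add (norm_add_le_of_le ?_ ?_) ?_)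
        · exact (norm_korComplex a).le
        · exact (norm_korComplex b).le
        · rw [norm_mul, Complex.norm_two, ← norm_toComplex a.1, ← norm_toComplex b.1]
          exact mul_le_mul_of_nonneg_left (norm_inner_le_norm _ _) zero_le_two
    _ ≤ (kor n a + kor n b) ^ 2 := by
        nlinarith [mul_le_mul (norm_fst_le_kor a) (norm_fst_le_kor b) (norm_nonneg _)
          (kor_nonneg a)]

lemma dK_triangle (p q r : Hpt n) : dK n p r ≤ dK n p q + dK n q r := by
  have h : hmul n (hinv n p) r = hmul n (hmul n (hinv n p) q) (hmul n (hinv n q) r) := by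
    rw [hmul_assoc, hmul_hinv_cancel_left]
  rw [dK, h]
  exact kor_hmul_le _ _

lemma dK_hmul_self (x w : Hpt n) : dK n x (hmul n x w) = kor n w := by
  rw [dK, hinv_hmul_cancel_left]

lemma dK_comm (p q : Hpt n) : dK n p q = dK n q p := by
  rw [dK, ← kor_hinv, hinv_hmul, dK]
  simp [hinv]

end Koranyi

section HorizontalPaths

variable {f : Hpt n → E n} {D : Hpt n → (E n →L[ℝ] E n)}

lemma hinv_hmul_smul_horizontal (q : Hpt n) (v : E n) (s r : ℝ) :
    hmul n (hinv n (hmul n q (s • v, 0))) (hmul n q (r • v, 0)) = ((r - s) • v, 0) := by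
  rw [hinv_hmul, hmul_assoc, hinv_hmul_cancel_left]
  exact Prod.ext (by simp only [hmul, hinv, sub_smul]; abel) (by simp [hmul, hinv])

lemma hasDerivAt_comp_horizontal_line (hf : ∀ x, PansuDiffAt n f x (D x))
    (q : Hpt n) (v : E n) (s : ℝ) :
    HasDerivAt (fun r : ℝ => f (hmul n q (r • v, 0))) (D (hmul n q (s • v, 0)) v) s := by
  rw [hasDerivAt_iff_isLittleO, Asymptotics.isLittleO_iff]
  intro ε hε
  obtain ⟨δ, hδ, hP⟩ := hf (hmul n q (s • v, 0)) (ε / (‖v‖ + 1)) (by positivity)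
  filter_upwards [Metric.ball_mem_nhds s (show 0 < δ / (‖v‖ + 1) by positivity)] with r hr
  rw [Metric.mem_ball, Real.dist_eq, lt_div_iff₀ (by positivity)] at hr
  have hdist : dK n (hmul n q (s • v, 0)) (hmul n q (r • v, 0)) = |r - s| * ‖v‖ := by
    rw [dK, hinv_hmul_smul_horizontal, kor_horizontal, norm_smul, Real.norm_eq_abs]
  have hclose := hP _ (by rw [hdist]; nlinarith [abs_nonneg (r - s)])
  rw [hinv_hmul_smul_horizontal, map_smul, hdist] at hclose
  refine hclose.trans ?_
  rw [Real.norm_eq_abs, div_mul_eq_mul_div, div_le_iff₀ (by positivity)]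
  nlinarith [mul_nonneg hε.le (abs_nonneg (r - s))]

lemma norm_sub_sub_le_of_horizontal_segment (hf : ∀ x, PansuDiffAt n f x (D x)) {c : ℝ}
    (q : Hpt n) (v : E n)
    (hD : ∀ s ∈ Icc (0 : ℝ) 1,
      ‖D (hmul n q (s • v, 0)) - ContinuousLinearMap.id ℝ (E n)‖ ≤ c) :
    ‖f (hmul n q (v, 0)) - f q - v‖ ≤ c * ‖v‖ := by
  have hderiv : ∀ s ∈ Icc (0 : ℝ) 1,
      HasDerivWithinAt (fun r => f (hmul n q (r • v, 0)) - r • v)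
        (D (hmul n q (s • v, 0)) v - v) (Icc 0 1) s := fun s _ => by
    have h := (hasDerivAt_comp_horizontal_line hf q v s).sub ((hasDerivAt_id s).smul_const v)
    rw [one_smul] at h
    exact h.hasDerivWithinAt
  have hbound (s : ℝ) (hs : s ∈ Ico (0 : ℝ) 1) : ‖D (hmul n q (s • v, 0)) v - v‖ ≤ c * ‖v‖ :=
    (ContinuousLinearMap.le_opNorm _ v).trans
      (mul_le_mul_of_nonneg_right (hD s (Ico_subset_Icc_self hs)) (norm_nonneg v))
  simpa [sub_right_comm, Prod.mk_zero_zero] using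
    norm_image_sub_le_of_norm_deriv_le_segment_01' hderiv hbound

def hpathEnd : Hpt n → List (E n) → Hpt n
  | w, [] => w
  | w, v :: vs => hpathEnd (hmul n w (v, 0)) vs

/-- By Cygan's inequality this keeps the whole polygonal path in the closed Korányi `r`-ball
about `0`. -/
def HPathBounded (r : ℝ) : Hpt n → List (E n) → Prop
  | _, [] => True
  | w, v :: vs => kor n w + ‖v‖ ≤ r ∧ HPathBounded r (hmul n w (v, 0)) vs

lemma norm_sub_sub_sum_le_of_hpathBounded (hf : ∀ x, PansuDiffAt n f x (D x)) {c r : ℝ}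
    (x : Hpt n)
    (hD : ∀ w, kor n w ≤ r → ‖D (hmul n x w) - ContinuousLinearMap.id ℝ (E n)‖ ≤ c)
    (w : Hpt n) (vs : List (E n)) (hvs : HPathBounded r w vs) :
    ‖f (hmul n x (hpathEnd w vs)) - f (hmul n x w) - vs.sum‖
      ≤ c * (vs.map (‖·‖)).sum := by
  induction vs generalizing w with
  | nil => simp [hpathEnd]
  | cons v vs ih =>
    obtain ⟨hv, hvs⟩ := hvs
    have hleg : ‖f (hmul n x (hmul n w (v, 0))) - f (hmul n x w) - v‖ ≤ c * ‖v‖ := by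
      rw [← hmul_assoc]
      refine norm_sub_sub_le_of_horizontal_segment hf _ v fun s hs => ?_
      rw [hmul_assoc]
      refine hD _ ((kor_hmul_le _ _).trans (le_trans ?_ hv))
      rw [kor_horizontal, norm_smul, Real.norm_of_nonneg hs.1]
      gcongr
      exact mul_le_of_le_one_left (norm_nonneg v) hs.2
    calc ‖f (hmul n x (hpathEnd w (v :: vs))) - f (hmul n x w) - (v :: vs).sum‖
        = ‖(f (hmul n x (hpathEnd (hmul n w (v, 0)) vs)) - f (hmul n x (hmul n w (v, 0)))
              - vs.sum) + (f (hmul n x (hmul n w (v, 0))) - f (hmul n x w) - v)‖ := by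
          simp only [hpathEnd, List.sum_cons]
          congr 1
          abel
      _ ≤ c * (vs.map (‖·‖)).sum + c * ‖v‖ := norm_add_le_of_le (ih _ hvs) hleg
      _ = c * ((v :: vs).map (‖·‖)).sum := by simp only [List.map_cons, List.sum_cons]; ring

lemma hpathEnd_commutator (u v h : E n) : hpathEnd 0 [u, v, -u, -v, h] = (h, omegaF n u v) := by
  simp [hpathEnd, hmul_horizontal, omegaF_comm u v]

lemma hpathBounded_commutator {u v h : E n} {b r : ℝ} (hu : ‖u‖ = b) (hv : ‖v‖ = b)
    (huv : |omegaF n u v| ≤ b ^ 2) (h4b : 4 * b ≤ r) (hh : 2 * b + ‖h‖ ≤ r) :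
    HPathBounded r 0 [u, v, -u, -v, h] := by
  have hb : 0 ≤ b := hu ▸ norm_nonneg u
  have hω : omegaF n u v ^ 2 ≤ b ^ 4 := by
    nlinarith [sq_abs (omegaF n u v), abs_nonneg (omegaF n u v)]
  have huv' : ‖u + v‖ ^ 4 ≤ (2 * b) ^ 4 :=
    pow_le_pow_left₀ (norm_nonneg _) (by linarith [norm_add_le u v]) 4
  have hk₂ : kor n (u + v, omegaF n u v / 2) ≤ 3 * b :=
    kor_le_of_pow_four_le (by positivity) (by dsimp only; nlinarith)
  have hk₃ : kor n (v, omegaF n u v) ≤ 3 * b :=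
    kor_le_of_pow_four_le (by positivity) (by dsimp only; rw [hv]; nlinarith [pow_nonneg hb 4])
  have hk₄ : kor n (0, omegaF n u v) ≤ 2 * b :=
    kor_le_of_pow_four_le (by positivity) (by dsimp only; rw [norm_zero]; nlinarith)
  simp only [HPathBounded, ← Prod.mk_zero_zero, kor_horizontal, norm_zero, hu, zero_add,
    hmul_horizontal, omegaF_zero_left, zero_div, add_zero, hv, norm_neg, add_neg_cancel_comm,
    omegaF_neg_right, omegaF_add_left, omegaF_self, omegaF_comm u v, neg_neg, add_halves,
    add_neg_cancel, neg_zero, and_true]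
  refine ⟨?_, ?_, ?_, ?_, ?_⟩ <;> linarith

end HorizontalPaths

lemma exists_norm_eq_one_omegaF_eq_one (hn : 1 ≤ n) :
    ∃ e e' : E n, ‖e‖ = 1 ∧ ‖e'‖ = 1 ∧ omegaF n e e' = 1 := by
  refine ⟨EuclideanSpace.single (evenIdx ⟨0, hn⟩) 1,
    EuclideanSpace.single (oddIdx ⟨0, hn⟩) 1, by simp, by simp, ?_⟩
  simp only [omegaF, PiLp.single_apply, evenIdx, oddIdx, Fin.ext_iff]
  rw [Finset.sum_eq_single ⟨0, hn⟩ (fun i _ hi => by simp_all [Fin.ext_iff]) (by simp)]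
  simp

lemma exists_omegaF_eq (hn : 1 ≤ n) (t : ℝ) :
    ∃ u v : E n, ‖u‖ = √|t| ∧ ‖v‖ = √|t| ∧ omegaF n u v = t := by
  obtain ⟨e, e', he, he', hee'⟩ := exists_norm_eq_one_omegaF_eq_one hn
  rcases le_or_gt 0 t with ht | ht
  · refine ⟨√|t| • e, √|t| • e', by simp [norm_smul, he], by simp [norm_smul, he'], ?_⟩
    rw [omegaF_smul_left, omegaF_smul_right, hee', abs_of_nonneg ht, mul_one,
      Real.mul_self_sqrt ht]
  · refine ⟨√|t| • e', √|t| • e, by simp [norm_smul, he'], by simp [norm_smul, he], ?_⟩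
    rw [omegaF_smul_left, omegaF_smul_right, omegaF_comm e e', hee', ← mul_assoc,
      Real.mul_self_sqrt (abs_nonneg t), abs_of_neg ht]
    ring

lemma norm_fst_le_of_apply_eq (hn : 1 ≤ n) {f : Hpt n → E n}
    {D : Hpt n → (E n →L[ℝ] E n)} (hf : ∀ x, PansuDiffAt n f x (D x))
    {p : Hpt n} {R c : ℝ}
    (hD : ∀ q, dK n p q < 5 * R → ‖D q - ContinuousLinearMap.id ℝ (E n)‖ < c)
    {x y : Hpt n} (hx : dK n p x < R) (hy : dK n p y < R) (hfxy : f x = f y) :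
    ‖(hmul n (hinv n x) y).1‖
      ≤ c * (‖(hmul n (hinv n x) y).1‖ + 4 * √|(hmul n (hinv n x) y).2|) := by
  set w := hmul n (hinv n x) y
  have hd : kor n w < 2 * R := by
    have hxy := dK_triangle x p y
    rw [dK_comm x p] at hxy
    exact hxy.trans_lt (by linarith)
  obtain ⟨u, v, hu, hv, huv⟩ := exists_omegaF_eq hn w.2
  have hbounded : HPathBounded (2 * kor n w) 0 [u, v, -u, -v, w.1] := by
    refine hpathBounded_commutator hu hv (by rw [huv, Real.sq_sqrt (abs_nonneg _)]) ?_ ?_ <;>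
      linarith [two_mul_sqrt_abs_snd_le_kor w, norm_fst_le_kor w]
  have hball : ∀ w', kor n w' ≤ 2 * kor n w →
      ‖D (hmul n x w') - ContinuousLinearMap.id ℝ (E n)‖ ≤ c := fun w' hw' => by
    refine (hD _ ((dK_triangle p x _).trans_lt ?_)).le
    rw [dK_hmul_self]
    linarith
  have key := norm_sub_sub_sum_le_of_hpathBounded hf x hball 0 _ hbounded
  have hsum : [u, v, -u, -v, w.1].sum = w.1 := by
    simp only [List.sum_cons, List.sum_nil, add_zero]
    abel
  have hlength : ([u, v, -u, -v, w.1].map (‖·‖)).sum = ‖w.1‖ + 4 * √|w.2| := by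
    simp only [List.map_cons, List.map_nil, List.sum_cons, List.sum_nil, norm_neg, hu, hv]
    ring
  rwa [hpathEnd_commutator, huv, Prod.mk.eta, hmul_hinv_cancel_left, hmul_zero, hfxy, sub_self,
    zero_sub, norm_neg, hsum, hlength] at key

lemma cone_inequalities_of_norm_fst_le {w : Hpt n} {c lam : ℝ} (hc₀ : 0 ≤ c)
    (hc : c ≤ 1 / 20) (hlam : lam * (5 * c) ^ 2 ≤ 1)
    (h : ‖w.1‖ ≤ c * (‖w.1‖ + 4 * √|w.2|)) :
    kor n w ^ 2 / 16 ≤ |w.2| ∧ lam * ‖w.1‖ ^ 2 ≤ |w.2| := by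
  set b := √|w.2|
  have hb : b ^ 2 = |w.2| := Real.sq_sqrt (abs_nonneg _)
  have h5 : ‖w.1‖ ≤ 5 * c * b := by nlinarith [norm_nonneg w.1, Real.sqrt_nonneg |w.2|]
  have h2 : ‖w.1‖ ^ 2 ≤ (5 * c) ^ 2 * |w.2| := by
    rw [← hb, ← mul_pow]
    exact pow_le_pow_left₀ (norm_nonneg _) h5 2
  constructor
  · have h1 : ‖w.1‖ ^ 2 ≤ |w.2| :=
      h2.trans (mul_le_of_le_one_left (abs_nonneg _) (by nlinarith))
    have h4 : (kor n w ^ 2) ^ 2 ≤ (16 * |w.2|) ^ 2 := by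
      rw [← pow_mul, kor_pow_four, mul_pow, sq_abs]
      nlinarith [pow_le_pow_left₀ (sq_nonneg ‖w.1‖) h1 2, sq_abs w.2, sq_nonneg w.2]
    linarith [le_of_pow_le_pow_left₀ two_ne_zero (by positivity) h4]
  · rcases le_or_gt 0 lam with hlam₀ | hlam₀
    · nlinarith [abs_nonneg w.2]
    · nlinarith [abs_nonneg w.2, sq_nonneg ‖w.1‖]

lemma coneProp_of_le (hn : 1 ≤ n) {lam c : ℝ} (hc₀ : 0 ≤ c) (hc : c ≤ 1 / 20)
    (hlam : lam * (5 * c) ^ 2 ≤ 1) : ConeProp n lam c :=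
  fun _ _ _ _ _ hf hD _ _ hx hy hfxy => cone_inequalities_of_norm_fst_le hc₀ hc hlam
    (norm_fst_le_of_apply_eq hn hf.1 hD hx hy hfxy)

end Heisenberg

/-- **Fibers of near-identity `C¹_H` maps satisfy a vertical cone condition**
(Corollary 2.4): for every `λ > 0` there is `c > 0` with the cone property, and for
`λ = 2` one may take `c = 1/20`. -/
theorem fibers_vertical_cone (n : ℕ) (hn : 1 ≤ n) :
    (∀ lam : ℝ, 0 < lam → ∃ c : ℝ, 0 < c ∧ ConeProp n lam c) ∧
    ConeProp n 2 (1 / 20) := by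
  refine ⟨fun lam hlam => ⟨1 / (20 * (1 + lam)), by positivity,
    Heisenberg.coneProp_of_le hn (by positivity) ?_ ?_⟩,
    Heisenberg.coneProp_of_le hn (by norm_num) le_rfl (by norm_num)⟩
  · rw [div_le_div_iff₀ (by positivity) (by norm_num)]
    nlinarith
  · field_simp
    nlinarith
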